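/- Let R be a commutative ring with involution σ such that 2 is invertible is not required; let α ∈ R^× with σ(α) = -α and b_1, …, b_n ∈ R with σ(b_i) = (-1)^i b_i for all i. Define the n×n matrix X with X_{1,1} = -b_1, X_{1,k} = -α^{-(k-1)} b_k for 2 ≤ k ≤ n-1, X_{1,n} = -2α^{-(n-1)} b_n, X_{n+1-k,n} = -α^{-(k-1)} b_k for 1 ≤ k ≤ n-1, X_{k+1,k} = α for 1 ≤ k ≤ n-1, and all other entries 0. Let Φ_n be the n×n antidiagonal matrix with all antidiagonal entries equal to 1. Then Φ_n X + σ(Xᵀ) Φ_n = 0, i.e., X lies in the unitary Lie algebra associated to the hermitian form with Gram matrix Φ_n. -/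
import Mathlib

open Matrix

private lemma sum_phi_left {R : Type*} [CommRing R] {n : ℕ} (hn : 1 ≤ n) (i : Fin n)
    (f : Fin n → R) :
    ∑ k : Fin n, (if i.val + k.val = n - 1 then (1:R) else 0) * f k
      = f ⟨n - 1 - i.val, by omega⟩ := by
  rw [Finset.sum_eq_single (⟨n - 1 - i.val, by omega⟩ : Fin n)]
  · rw [if_pos (by simp; omega), one_mul]
  · intro k _ hk
    rw [if_neg, zero_mul]
    intro h; apply hk; ext; simp; omega
  · intro h; exact absurd (Finset.mem_univ _) h

private lemma sum_phi_right {R : Type*} [CommRing R] {n : ℕ} (hn : 1 ≤ n) (j : Fin n)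
    (g : Fin n → R) :
    ∑ k : Fin n, g k * (if k.val + j.val = n - 1 then (1:R) else 0)
      = g ⟨n - 1 - j.val, by omega⟩ := by
  rw [Finset.sum_eq_single (⟨n - 1 - j.val, by omega⟩ : Fin n)]
  · rw [if_pos (by simp; omega), mul_one]
  · intro k _ hk
    rw [if_neg, mul_zero]
    intro h; apply hk; ext; simp; omega
  · intro h; exact absurd (Finset.mem_univ _) h

/-- The corrected Kostant-section matrix `X` lies in the unitary Lie algebra:
`Φ * X + σ(Xᵀ) * Φ = 0`, where `Φ` is the antidiagonal permutation matrix, `σ` is a ring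
involution with `σ α = -α` for the unit `α`, and `σ (b i) = (-1)^i * b i`.
Indices are 0-based: row/column `i` corresponds to the paper's index `i + 1`. -/
theorem kostant_section_mem_unitary_lie_algebra {R : Type*} [CommRing R] (n : ℕ) (hn : 1 ≤ n)
    (σ : R →+* R) (hinv : σ.comp σ = RingHom.id R)
    (α : Rˣ) (hα : (α : R) + σ (α : R) = 0)
    (b : ℕ → R) (hb : ∀ i, 1 ≤ i → i ≤ n → σ (b i) = (-1 : R) ^ i * b i)
    (X : Matrix (Fin n) (Fin n) R)
    (hX : X = Matrix.of fun i j =>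
      if i.val = 0 ∧ j.val = n - 1 then -2 * (↑α⁻¹ : R) ^ (n - 1) * b n
      else if i.val = 0 then -(↑α⁻¹ : R) ^ j.val * b (j.val + 1)
      else if j.val = n - 1 then -(↑α⁻¹ : R) ^ (n - 1 - i.val) * b (n - i.val)
      else if i.val = j.val + 1 then (α : R)
      else 0)
    (Φ : Matrix (Fin n) (Fin n) R)
    (hΦ : Φ = Matrix.of fun i j => if i.val + j.val = n - 1 then (1 : R) else 0) :
    Φ * X + (Xᵀ.map σ) * Φ = 0 := by
  have hσα : σ (α : R) = -(α : R) := by linear_combination hα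
  have h1 : σ (↑α⁻¹ : R) * σ (α : R) = 1 := by
    rw [← _root_.map_mul, Units.inv_mul, _root_.map_one]
  have hσαinv : σ (↑α⁻¹ : R) = -(↑α⁻¹ : R) := by
    calc σ (↑α⁻¹ : R) = σ (↑α⁻¹ : R) * ((α : R) * (↑α⁻¹ : R)) := by
          rw [Units.mul_inv, mul_one]
      _ = (σ (↑α⁻¹ : R) * σ (α : R)) * (-(↑α⁻¹ : R)) := by rw [hσα]; ring
      _ = -(↑α⁻¹ : R) := by rw [h1, one_mul]
  have hσpow : ∀ k : ℕ, σ ((↑α⁻¹ : R) ^ k) = (-1 : R) ^ k * (↑α⁻¹ : R) ^ k := by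
    intro k
    rw [map_pow, hσαinv, neg_pow]
  subst hX hΦ
  ext i j
  simp only [Matrix.add_apply, Matrix.mul_apply, Matrix.zero_apply, Matrix.of_apply,
    Matrix.transpose_apply, Matrix.map_apply]
  rw [sum_phi_left hn, sum_phi_right hn]
  simp only [Matrix.of_apply]
  set a : ℕ := n - 1 - i.val with ha
  set c : ℕ := n - 1 - j.val with hc
  have hi := i.isLt
  have hj := j.isLt
  -- case analysis
  by_cases h1' : a = 0 ∧ j.val = n - 1
  · -- then also c = 0 ∧ i.val = n-1
    have hi' : i.val = n - 1 := by omega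
    have hc0 : c = 0 ∧ i.val = n - 1 := by omega
    rw [if_pos h1', if_pos hc0]
    rw [_root_.map_mul, _root_.map_mul, hσpow, hb n hn le_rfl]
    have h2 : σ (-2 : R) = -2 := by
      have : (-2 : R) = -(1+1) := by ring
      rw [this, map_neg, map_add, _root_.map_one]
    rw [h2]
    have hodd : Odd (n - 1 + n) := ⟨n - 1, by omega⟩
    calc -2 * (↑α⁻¹:R) ^ (n-1) * b n + -2 * ((-1:R)^(n-1) * (↑α⁻¹:R)^(n-1)) * ((-1:R)^n * b n)
        = -2 * (↑α⁻¹:R) ^ (n-1) * b n + -2 * ((-1:R)^(n-1+n) * (↑α⁻¹:R)^(n-1)) * b n := by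
          rw [pow_add]; ring
      _ = 0 := by rw [hodd.neg_one_pow]; ring
  · rw [if_neg h1']
    by_cases h2' : a = 0
    · -- i = n-1, j < n-1; second entry: c ≠ 0, column i = n-1 branch
      have hi' : i.val = n - 1 := by omega
      have hjlt : j.val < n - 1 := by omega
      have hcne : ¬ (c = 0 ∧ i.val = n - 1) := by omega
      have hcne2 : ¬ c = 0 := by omega
      rw [if_pos h2', if_neg hcne, if_neg hcne2, if_pos hi']
      have e1 : n - 1 - c = j.val := by omega
      have e2 : n - c = j.val + 1 := by omega
      rw [e1, e2, _root_.map_mul, map_neg, hσpow, hb (j.val + 1) (by omega) (by omega)]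
      have hodd : Odd (j.val + (j.val + 1)) := ⟨j.val, by omega⟩
      calc -(↑α⁻¹:R) ^ j.val * b (j.val+1)
            + -((-1:R)^j.val * (↑α⁻¹:R)^j.val) * ((-1:R)^(j.val+1) * b (j.val+1))
          = -(↑α⁻¹:R) ^ j.val * b (j.val+1)
            + -((-1:R)^(j.val+(j.val+1)) * (↑α⁻¹:R)^j.val * b (j.val+1)) := by
            rw [pow_add]; ring
        _ = 0 := by rw [hodd.neg_one_pow]; ring
    · rw [if_neg h2']
      by_cases h3' : j.val = n - 1
      · -- symmetric: c = 0, i < n - 1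
        have hc0 : c = 0 := by omega
        have hilt : i.val < n - 1 := by omega
        have hcne : ¬ (c = 0 ∧ i.val = n - 1) := by omega
        rw [if_pos h3', if_neg hcne, if_pos hc0]
        have e1 : n - 1 - a = i.val := by omega
        have e2 : n - a = i.val + 1 := by omega
        rw [e1, e2, _root_.map_mul, map_neg, hσpow, hb (i.val + 1) (by omega) (by omega)]
        have hodd : Odd (i.val + (i.val + 1)) := ⟨i.val, by omega⟩
        calc -(↑α⁻¹:R) ^ i.val * b (i.val+1)
              + -((-1:R)^i.val * (↑α⁻¹:R)^i.val) * ((-1:R)^(i.val+1) * b (i.val+1))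
            = -(↑α⁻¹:R) ^ i.val * b (i.val+1)
              + -((-1:R)^(i.val+(i.val+1)) * (↑α⁻¹:R)^i.val * b (i.val+1)) := by
              rw [pow_add]; ring
          _ = 0 := by rw [hodd.neg_one_pow]; ring
      · rw [if_neg h3']
        by_cases h4' : a = j.val + 1
        · -- entry α; second: c = i + 1
          have hcne : ¬ (c = 0 ∧ i.val = n - 1) := by omega
          have hcne2 : ¬ c = 0 := by omega
          have hine : ¬ i.val = n - 1 := by omega
          have hc4 : c = i.val + 1 := by omega
          rw [if_pos h4', if_neg hcne, if_neg hcne2, if_neg hine, if_pos hc4]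
          exact hα
        · rw [if_neg h4']
          have hcne : ¬ (c = 0 ∧ i.val = n - 1) := by omega
          have hcne2 : ¬ c = 0 := by omega
          have hine : ¬ i.val = n - 1 := by omega
          have hc4 : ¬ c = i.val + 1 := by omega
          rw [if_neg hcne, if_neg hcne2, if_neg hine, if_neg hc4, map_zero, add_zero]
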